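/- Rank-1 completeness of the translated probe states for quantum detector tomography: Let d ≥ 2 and let φ, χ ∈ ℂ^d with φ_0 ≠ 0; set F = φφ† and G = χχ†. Suppose Tr(F ρ) = Tr(G ρ) for every ρ among: ρ_0 = e_0e_0†; ρ_k = (1/d)(𝟙 + e_0e_k† + e_ke_0†) and ρ̃_k = (1/d)(𝟙 − i·e_0e_k† + i·e_ke_0†) for k = 1, …, d−1; and the maximally mixed state (1/d)·𝟙. Then F = G. -/

import Mathlib

/-!
Probing with `(1/d)𝟙` gives `Tr F`; then `ρ_k` and `ρ̃_k` give `F_{k0} + F_{0k}` and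
`F_{0k} - F_{k0}`, hence the whole row and column of `F` through `0`, while `ρ₀` gives `F_{00}`.
A rank-one matrix satisfies `F_{jk} F_{00} = F_{j0} F_{0k}`, so since `F_{00} = |φ₀|² ≠ 0`
this row and column determine `F`.
-/

open Matrix

/-- The rank-one (outer-product) matrix `ψψ†`, with entries `ψ_j · conj(ψ_k)`. -/
noncomputable def outerProd {n : Type*} (ψ : n → ℂ) : Matrix n n ℂ :=
  Matrix.of fun j k => ψ j * star (ψ k)

namespace Matrix

variable {n : Type*} [Fintype n]

theorem trace_mul_single_one {R : Type*} [Semiring R] [DecidableEq n]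
    (A : Matrix n n R) (i j : n) : (A * single i j 1).trace = A j i := by
  simp [trace_mul_single]

theorem trace_mul_smul_eq_iff {c : ℂ} (hc : c ≠ 0) {A B M : Matrix n n ℂ} :
    (A * (c • M)).trace = (B * (c • M)).trace ↔ (A * M).trace = (B * M).trace := by
  simp only [Matrix.mul_smul, trace_smul, smul_eq_mul, mul_right_inj' hc]

variable [DecidableEq n]

theorem apply_eq_of_trace_mul_probe_eq {A B : Matrix n n ℂ} {i k : n}
    (htr : A.trace = B.trace)
    (hre : (A * (1 + single i k 1 + single k i 1)).trace
      = (B * (1 + single i k 1 + single k i 1)).trace)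
    (him : (A * (1 - Complex.I • single i k 1 + Complex.I • single k i 1)).trace
      = (B * (1 - Complex.I • single i k 1 + Complex.I • single k i 1)).trace) :
    A k i = B k i ∧ A i k = B i k := by
  simp only [Matrix.mul_add, Matrix.mul_sub, Matrix.mul_one, Matrix.mul_smul, trace_add,
    trace_sub, trace_smul, trace_mul_single_one, smul_eq_mul] at hre him
  constructor
  · linear_combination (hre - htr) / 2 + Complex.I * (him - htr) / 2
      + (A k i - B k i - A i k + B i k) / 2 * Complex.I_sq
  · linear_combination (hre - htr) / 2 - Complex.I * (him - htr) / 2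
      + (A i k - B i k - A k i + B k i) / 2 * Complex.I_sq

end Matrix

theorem outerProd_apply_mul_apply {n : Type*} (ψ : n → ℂ) (i j k : n) :
    outerProd ψ j k * outerProd ψ i i = outerProd ψ j i * outerProd ψ i k := by
  simp only [outerProd, of_apply]
  ring

theorem outerProd_eq_of_apply_eq {n : Type*} {ψ χ : n → ℂ} {i : n} (hψ : ψ i ≠ 0)
    (hcol : ∀ j, outerProd ψ j i = outerProd χ j i)
    (hrow : ∀ k, outerProd ψ i k = outerProd χ i k) :
    outerProd ψ = outerProd χ := by
  have hii : outerProd ψ i i ≠ 0 := mul_ne_zero hψ (star_ne_zero.mpr hψ)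
  ext j k
  apply mul_right_cancel₀ hii
  calc outerProd ψ j k * outerProd ψ i i
      = outerProd χ j i * outerProd χ i k := by
        rw [outerProd_apply_mul_apply, hcol, hrow]
    _ = outerProd χ j k * outerProd ψ i i := by
        rw [← outerProd_apply_mul_apply, hcol]

/-- **Rank-1 completeness of the translated probe states for detector tomography.**
If the rank-1 detector elements `F = φφ†` (with `φ₀ ≠ 0`) and `G = χχ†` give the same outcome
numbers `Tr(F ρ)` on the probe states `ρ₀ = e₀e₀†`, `ρ_k = (1/d)(𝟙 + e₀e_k† + e_ke₀†)`,
`ρ̃_k = (1/d)(𝟙 − i e₀e_k† + i e_ke₀†)` (k = 1,…,d−1) and the maximally mixed state `(1/d)𝟙`,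
then `F = G`. -/
theorem detector_rank1_complete (d : ℕ) (hd : 2 ≤ d)
    (φ χ : Fin d → ℂ) (hφ0 : φ ⟨0, by omega⟩ ≠ 0)
    (h0 : (outerProd φ * Matrix.single (⟨0, by omega⟩ : Fin d) (⟨0, by omega⟩ : Fin d) 1).trace
        = (outerProd χ * Matrix.single (⟨0, by omega⟩ : Fin d) (⟨0, by omega⟩ : Fin d) 1).trace)
    (hk : ∀ k : Fin d, k ≠ ⟨0, by omega⟩ →
      (outerProd φ * (((d : ℂ))⁻¹ • ((1 : Matrix (Fin d) (Fin d) ℂ)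
          + Matrix.single (⟨0, by omega⟩ : Fin d) k 1
          + Matrix.single k (⟨0, by omega⟩ : Fin d) 1))).trace
        = (outerProd χ * (((d : ℂ))⁻¹ • ((1 : Matrix (Fin d) (Fin d) ℂ)
          + Matrix.single (⟨0, by omega⟩ : Fin d) k 1
          + Matrix.single k (⟨0, by omega⟩ : Fin d) 1))).trace)
    (hkt : ∀ k : Fin d, k ≠ ⟨0, by omega⟩ →
      (outerProd φ * (((d : ℂ))⁻¹ • ((1 : Matrix (Fin d) (Fin d) ℂ)
          - Complex.I • Matrix.single (⟨0, by omega⟩ : Fin d) k 1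
          + Complex.I • Matrix.single k (⟨0, by omega⟩ : Fin d) 1))).trace
        = (outerProd χ * (((d : ℂ))⁻¹ • ((1 : Matrix (Fin d) (Fin d) ℂ)
          - Complex.I • Matrix.single (⟨0, by omega⟩ : Fin d) k 1
          + Complex.I • Matrix.single k (⟨0, by omega⟩ : Fin d) 1))).trace)
    (hmix : (outerProd φ * (((d : ℂ))⁻¹ • (1 : Matrix (Fin d) (Fin d) ℂ))).trace
          = (outerProd χ * (((d : ℂ))⁻¹ • (1 : Matrix (Fin d) (Fin d) ℂ))).trace) :
    outerProd φ = outerProd χ := by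
  set z : Fin d := ⟨0, by omega⟩
  have hdinv : ((d : ℂ))⁻¹ ≠ 0 := inv_ne_zero (Nat.cast_ne_zero.mpr (by omega))
  have htr : (outerProd φ).trace = (outerProd χ).trace := by
    simpa using (trace_mul_smul_eq_iff hdinv).1 hmix
  have hcross : ∀ k, outerProd φ k z = outerProd χ k z ∧ outerProd φ z k = outerProd χ z k := by
    intro k
    by_cases hkz : k = z
    · subst hkz
      simpa [trace_mul_single_one] using h0
    · exact apply_eq_of_trace_mul_probe_eq htr ((trace_mul_smul_eq_iff hdinv).1 (hk k hkz))
        ((trace_mul_smul_eq_iff hdinv).1 (hkt k hkz))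
  exact outerProd_eq_of_apply_eq hφ0 (fun j => (hcross j).1) (fun k => (hcross k).2)
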